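/- The subgroup 𝔎 is a normal subgroup of Sp(2g,ℤ). -/

import Mathlib

open Matrix

/-- The standard symplectic form matrix `J = [[0, I], [-I, 0]]`. -/
def Jmat (g : ℕ) (R : Type*) [CommRing R] :
    Matrix (Fin g ⊕ Fin g) (Fin g ⊕ Fin g) R :=
  Matrix.fromBlocks 0 1 (-1) 0

/-- The set of integral symplectic matrices, `Sp(2g, ℤ)`. -/
def SpSet (g : ℕ) : Set (Matrix (Fin g ⊕ Fin g) (Fin g ⊕ Fin g) ℤ) :=
  {X | Xᵀ * Jmat g ℤ * X = Jmat g ℤ}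

/-- The subset `𝔎` of `Sp(2g, ℤ)`: symplectic matrices of the form
`[[I+2a, 2b], [2c, I+2d]]` with `Diag b` and `Diag c` even and `Tr a` even. -/
def KSet (g : ℕ) : Set (Matrix (Fin g ⊕ Fin g) (Fin g ⊕ Fin g) ℤ) :=
  {X | X ∈ SpSet g ∧ ∃ a b c d : Matrix (Fin g) (Fin g) ℤ,
    X = Matrix.fromBlocks (1 + 2 • a) (2 • b) (2 • c) (1 + 2 • d) ∧
    (∀ i, (2:ℤ) ∣ b i i) ∧ (∀ i, (2:ℤ) ∣ c i i) ∧ (2:ℤ) ∣ Matrix.trace a}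

/-- The principal congruence subgroup `Γ(2g, N)`: symplectic integral matrices
congruent to the identity modulo `N`. -/
def GammaSet (g : ℕ) (N : ℤ) : Set (Matrix (Fin g ⊕ Fin g) (Fin g ⊕ Fin g) ℤ) :=
  {X | X ∈ SpSet g ∧ ∀ i j, N ∣ (X i j - (1 : Matrix (Fin g ⊕ Fin g) (Fin g ⊕ Fin g) ℤ) i j)}

/-!
Write `X = 1 + 2N` and `S = N J`. Since `X` is symplectic, `S` is symmetric mod 2, and the
conditions defining `𝔎` say that `S` mod 2 has zero diagonal and that the upper-right block of `S`
has even trace. Conjugating `X` by `P` replaces `S` by `P S Pᵀ`. Over `ZMod 2` a symmetric matrix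
with zero diagonal is `u - uᵀ` for some `u`, and the trace of the upper-right block of `u - uᵀ`
is `tr (u J)`, which `u ↦ P u Pᵀ` preserves because `Pᵀ J P = J`.
-/

namespace Matrix

theorem one_add_two_nsmul_fromBlocks {l R : Type*} [DecidableEq l] [Semiring R]
    (a b c d : Matrix l l R) :
    (1 : Matrix (l ⊕ l) (l ⊕ l) R) + 2 • fromBlocks a b c d =
      fromBlocks (1 + 2 • a) (2 • b) (2 • c) (1 + 2 • d) := by
  rw [← fromBlocks_one, fromBlocks_smul, fromBlocks_add, zero_add, zero_add]

variable {l R : Type*} [Fintype l] [DecidableEq l] [CommRing R]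

theorem exists_eq_sub_transpose {n G : Type*} [AddGroup G] {S : Matrix n n G}
    (hS : Sᵀ = -S) (hdiag : ∀ i, S i i = 0) : ∃ u : Matrix n n G, S = u - uᵀ := by
  classical
  let : LinearOrder n := IsWellOrder.linearOrder WellOrderingRel
  have hswap : ∀ i j, S j i = -S i j := fun i j => congrFun (congrFun hS i) j
  refine ⟨of fun i j => if i < j then S i j else 0, ?_⟩
  ext i j
  rcases lt_trichotomy i j with h | rfl | h
  · simp [h, h.not_gt]
  · simp [hdiag]
  · simp [h, h.not_gt, hswap i j]

theorem conj_sub_transpose {n : Type*} [Fintype n] (A u : Matrix n n R) :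
    A * (u - uᵀ) * Aᵀ = A * u * Aᵀ - (A * u * Aᵀ)ᵀ := by
  simp [mul_sub, sub_mul, transpose_mul, Matrix.mul_assoc]

theorem fromBlocks_mul_J (a b c d : Matrix l l R) :
    fromBlocks a b c d * J l R = fromBlocks b (-a) d (-c) := by
  simp [J, fromBlocks_multiply]

theorem trace_toBlocks₁₂_sub_transpose (u : Matrix (l ⊕ l) (l ⊕ l) R) :
    (u - uᵀ).toBlocks₁₂.trace = (u * J l R).trace := by
  simp [trace, J, mul_apply, Fintype.sum_sum_type, one_apply, toBlocks₁₂,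
    Finset.sum_sub_distrib, ← sub_eq_add_neg]

theorem eq_neg_J_mul_transpose_mul_J_of_mul_eq_one {A : Matrix (l ⊕ l) (l ⊕ l) R}
    (hA : A ∈ symplecticGroup l R) {B : Matrix (l ⊕ l) (l ⊕ l) R} (hAB : A * B = 1) :
    B = -J l R * Aᵀ * J l R :=
  (inv_eq_right_inv hAB).symm.trans (SymplecticGroup.inv_eq_symplectic_inv A hA)

theorem mem_symplecticGroup_of_mul_eq_one {A : Matrix (l ⊕ l) (l ⊕ l) R}
    (hA : A ∈ symplecticGroup l R) {B : Matrix (l ⊕ l) (l ⊕ l) R} (hAB : A * B = 1) :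
    B ∈ symplecticGroup l R := by
  rw [eq_neg_J_mul_transpose_mul_J_of_mul_eq_one hA hAB]
  exact mul_mem (mul_mem (SymplecticGroup.neg_mem (SymplecticGroup.J_mem _ _))
    (SymplecticGroup.transpose_mem hA)) (SymplecticGroup.J_mem _ _)

theorem trace_toBlocks₁₂_conj_sub_transpose {A : Matrix (l ⊕ l) (l ⊕ l) R}
    (hA : A ∈ symplecticGroup l R) (u : Matrix (l ⊕ l) (l ⊕ l) R) :
    (A * (u - uᵀ) * Aᵀ).toBlocks₁₂.trace = (u - uᵀ).toBlocks₁₂.trace := by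
  rw [conj_sub_transpose, trace_toBlocks₁₂_sub_transpose, trace_toBlocks₁₂_sub_transpose,
    Matrix.mul_assoc, Matrix.mul_assoc, trace_mul_comm, Matrix.mul_assoc, Matrix.mul_assoc,
    ← Matrix.mul_assoc Aᵀ, SymplecticGroup.mem_iff'.1 hA]

theorem diag_conj_eq_zero_and_trace_toBlocks₁₂_conj_eq {A S : Matrix (l ⊕ l) (l ⊕ l) R}
    (hA : A ∈ symplecticGroup l R) (hS : Sᵀ = -S) (hdiag : ∀ x, S x x = 0) :
    (∀ x, (A * S * Aᵀ) x x = 0) ∧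
      (A * S * Aᵀ).toBlocks₁₂.trace = S.toBlocks₁₂.trace := by
  obtain ⟨u, rfl⟩ := exists_eq_sub_transpose hS hdiag
  exact ⟨fun x => by rw [conj_sub_transpose, sub_apply, transpose_apply, sub_self],
    trace_toBlocks₁₂_conj_sub_transpose hA u⟩

end Matrix

section Integral

variable {l : Type*} [Fintype l] [DecidableEq l]

theorem two_dvd_mul_J_sub_transpose_of_one_add_two_nsmul_mem {N : Matrix (l ⊕ l) (l ⊕ l) ℤ}
    (hX : 1 + 2 • N ∈ symplecticGroup l ℤ) (x y : l ⊕ l) :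
    2 ∣ (N * J l ℤ) x y - (N * J l ℤ) y x := by
  have expand : (1 + 2 • N) * J l ℤ * (1 + 2 • N)ᵀ =
      J l ℤ + 2 • (N * J l ℤ + J l ℤ * Nᵀ + 2 • (N * J l ℤ * Nᵀ)) := by
    simp only [transpose_add, transpose_one, transpose_smul, add_mul, mul_add, one_mul, mul_one,
      Matrix.smul_mul, Matrix.mul_smul, smul_add, smul_smul, Matrix.mul_assoc]
    abel
  have key : N * J l ℤ + J l ℤ * Nᵀ + 2 • (N * J l ℤ * Nᵀ) = 0 := by
    have h : 2 • (N * J l ℤ + J l ℤ * Nᵀ + 2 • (N * J l ℤ * Nᵀ)) = 0 :=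
      add_eq_left.mp ((SymplecticGroup.mem_iff.1 hX).symm.trans expand).symm
    ext i j
    simpa using congrFun₂ h i j
  have hskew : (N * J l ℤ)ᵀ = -(J l ℤ * Nᵀ) := by
    rw [transpose_mul, J_transpose, Matrix.neg_mul]
  refine ⟨-(N * J l ℤ * Nᵀ) x y, ?_⟩
  have hxy := congrFun₂ key x y
  have hyx := congrFun₂ hskew x y
  rw [Matrix.add_apply, Matrix.add_apply, Matrix.smul_apply, Matrix.zero_apply, two_nsmul] at hxy
  rw [transpose_apply, Matrix.neg_apply] at hyx
  linarith

theorem Int.two_dvd_iff_intCast_zmod_two_eq_zero (z : ℤ) : 2 ∣ z ↔ (z : ZMod 2) = 0 := by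
  simpa using (ZMod.intCast_zmod_eq_zero_iff_dvd z 2).symm

theorem two_dvd_diag_and_trace_toBlocks₁₂_conj {A S : Matrix (l ⊕ l) (l ⊕ l) ℤ}
    (hA : A ∈ symplecticGroup l ℤ) (hS : ∀ x y, 2 ∣ S x y - S y x) (hdiag : ∀ x, 2 ∣ S x x)
    (htr : 2 ∣ S.toBlocks₁₂.trace) :
    (∀ x, 2 ∣ (A * S * Aᵀ) x x) ∧ 2 ∣ (A * S * Aᵀ).toBlocks₁₂.trace := by
  set f := Int.castRingHom (ZMod 2)
  have hs : (S.map f)ᵀ = -S.map f := by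
    ext x y
    rw [neg_apply, ZModModule.neg_eq_self]
    exact (ZMod.intCast_eq_intCast_iff_dvd_sub _ _ 2).2 (by simpa using hS x y)
  have hsdiag : ∀ x, S.map f x x = 0 := fun x =>
    (Int.two_dvd_iff_intCast_zmod_two_eq_zero _).1 (hdiag x)
  obtain ⟨hd, ht⟩ :=
    diag_conj_eq_zero_and_trace_toBlocks₁₂_conj_eq (SymplecticGroup.map_mem hA f) hs hsdiag
  have hmap : (A * S * Aᵀ).map f = A.map f * S.map f * (A.map f)ᵀ := by
    simp only [Matrix.map_mul, transpose_map]
  rw [← hmap] at hd ht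
  simp only [Int.two_dvd_iff_intCast_zmod_two_eq_zero] at htr ⊢
  refine ⟨hd, ?_⟩
  calc ((A * S * Aᵀ).toBlocks₁₂.trace : ZMod 2)
      = ((A * S * Aᵀ).map f).toBlocks₁₂.trace := AddMonoidHom.map_trace f _
    _ = (S.map f).toBlocks₁₂.trace := ht
    _ = 0 := (AddMonoidHom.map_trace f _).symm.trans htr

theorem mul_mul_mul_J_eq_of_mul_eq_one {A B : Matrix (l ⊕ l) (l ⊕ l) ℤ}
    (hA : A ∈ symplecticGroup l ℤ) (hAB : A * B = 1) (N : Matrix (l ⊕ l) (l ⊕ l) ℤ) :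
    A * N * B * J l ℤ = A * (N * J l ℤ) * Aᵀ := by
  rw [eq_neg_J_mul_transpose_mul_J_of_mul_eq_one hA hAB]
  simp only [Matrix.mul_assoc, J_squared, Matrix.neg_mul, Matrix.mul_neg, Matrix.mul_one, neg_neg]

end Integral

theorem Jmat_eq_neg_J (g : ℕ) (R : Type*) [CommRing R] : Jmat g R = -J (Fin g) R := by
  simp [Jmat, J, fromBlocks_neg]

theorem mem_SpSet_iff {g : ℕ} {X : Matrix (Fin g ⊕ Fin g) (Fin g ⊕ Fin g) ℤ} :
    X ∈ SpSet g ↔ X ∈ symplecticGroup (Fin g) ℤ := by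
  rw [SymplecticGroup.mem_iff', SpSet, Set.mem_ofPred_eq, Jmat_eq_neg_J, Matrix.mul_neg,
    Matrix.neg_mul, neg_inj]

theorem mem_KSet_iff {g : ℕ} {X : Matrix (Fin g ⊕ Fin g) (Fin g ⊕ Fin g) ℤ} :
    X ∈ KSet g ↔ X ∈ symplecticGroup (Fin g) ℤ ∧ ∃ N, X = 1 + 2 • N ∧
      (∀ x, 2 ∣ (N * J (Fin g) ℤ) x x) ∧ 2 ∣ (N * J (Fin g) ℤ).toBlocks₁₂.trace := by
  constructor
  · rintro ⟨hX, a, b, c, d, rfl, hb, hc, ha⟩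
    refine ⟨mem_SpSet_iff.1 hX, fromBlocks a b c d, (one_add_two_nsmul_fromBlocks a b c d).symm,
      ?_, by simpa [fromBlocks_mul_J] using ha⟩
    rintro (i | i) <;> simp [fromBlocks_mul_J, hb, hc]
  · rintro ⟨hX, N, rfl, hdiag, htr⟩
    rw [← N.fromBlocks_toBlocks, fromBlocks_mul_J] at hdiag htr
    refine ⟨mem_SpSet_iff.2 hX, N.toBlocks₁₁, N.toBlocks₁₂, N.toBlocks₂₁, N.toBlocks₂₂, ?_,
      fun i => by simpa using hdiag (.inl i), fun i => by simpa using hdiag (.inr i),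
      by simpa using htr⟩
    rw [← one_add_two_nsmul_fromBlocks, fromBlocks_toBlocks]

theorem stmt4_general (g : ℕ)
    (P Q : Matrix (Fin g ⊕ Fin g) (Fin g ⊕ Fin g) ℤ)
    (hP : P ∈ SpSet g) (hPQ : P * Q = 1) :
    ∀ X ∈ KSet g, P * X * Q ∈ KSet g := by
  intro X hX
  rw [mem_SpSet_iff] at hP
  obtain ⟨hXsp, N, rfl, hdiag, htr⟩ := mem_KSet_iff.1 hX
  have hQ := mem_symplecticGroup_of_mul_eq_one hP hPQ
  refine mem_KSet_iff.2 ⟨mul_mem (mul_mem hP hXsp) hQ, P * N * Q, ?_, ?_⟩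
  · rw [mul_add, add_mul, mul_one, hPQ, Matrix.mul_smul, Matrix.smul_mul]
  · rw [mul_mul_mul_J_eq_of_mul_eq_one hP hPQ]
    exact two_dvd_diag_and_trace_toBlocks₁₂_conj hP
      (two_dvd_mul_J_sub_transpose_of_one_add_two_nsmul_mem hXsp) hdiag htr

/-- `𝔎` is a normal subgroup of `Sp(2g, ℤ)`: it is closed under conjugation by
any symplectic matrix. -/
theorem stmt4 (g : ℕ) (hg : 1 ≤ g)
    (P Q : Matrix (Fin g ⊕ Fin g) (Fin g ⊕ Fin g) ℤ)
    (hP : P ∈ SpSet g) (hPQ : P * Q = 1) (hQP : Q * P = 1) :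
    ∀ X ∈ KSet g, P * X * Q ∈ KSet g :=
  stmt4_general g P Q hP hPQ
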